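/- Let a be a non-autonomous closed symmetric form on [0,T] × V × V with constants M, α (and ω = 0). Define the piecewise-linear interpolated form a_Λ^L(t;u,v) := ((λ_{k+1}−t)/(λ_{k+1}−λ_k)) a_k(u,v) + ((t−λ_k)/(λ_{k+1}−λ_k)) a_{k+1}(u,v) for t ∈ [λ_k, λ_{k+1}], where a_k is the average of a over [λ_k, λ_{k+1}]. Then a_Λ^L is a symmetric non-autonomous closed form with the same constants M, α, and t ↦ a_Λ^L(t;u,v) is Lipschitz continuous on [0,T] for each fixed u, v ∈ V. -/

import Mathlib

open MeasureTheory Filter intervalIntegral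

noncomputable section

variable {X : Type*} [NormedAddCommGroup X] [NormedSpace ℝ X] [CompleteSpace X]

/-- Average of `f` over the `k`-th interval of the uniform subdivision of `[0,T]`
into `n+1` subintervals. -/
def uavg (f : ℝ → X) (T : ℝ) (n k : ℕ) : X :=
  ((n + 1 : ℝ) / T) • ∫ r in ((k : ℝ) * (T / (n + 1)))..(((k : ℝ) + 1) * (T / (n + 1))), f r

/-- Index of the subinterval containing `t` (clamped to `n`). -/
def uidx (T : ℝ) (n : ℕ) (t : ℝ) : ℕ := min ⌊t * (n + 1) / T⌋₊ n

/-- Piecewise linear interpolation of the interval averages of `f` over the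
uniform subdivision of `[0,T]` into `n+1` subintervals. -/
def linApprox (f : ℝ → X) (T : ℝ) (n : ℕ) (t : ℝ) : X :=
  (((uidx T n t + 1 : ℝ) * (T / (n + 1)) - t) / (T / (n + 1))) • uavg f T n (uidx T n t) +
    ((t - (uidx T n t : ℝ) * (T / (n + 1))) / (T / (n + 1))) •
      uavg f T n (min (uidx T n t + 1) n)

/-- The piecewise linear interpolation `a_Λ^L` of the interval averages of a
non-autonomous form `a`. -/
def formLin {V : Type*} [NormedAddCommGroup V] [InnerProductSpace ℂ V]
    (a : ℝ → V →ₗ⋆[ℂ] V →ₗ[ℂ] ℂ) (T : ℝ) (n : ℕ) (t : ℝ) (u v : V) : ℂ :=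
  linApprox (fun r => a r u v) T n t

/-!
For `t ∈ [λ_k, λ_{k+1}]` the value `a_Λ^L(t;u,v)` is a convex combination of the two averages
`a_k(u,v)`, `a_{k+1}(u,v)`, and each average is a mean of values `a(s;u,v)` with `s ∈ [0,T]`.
So every condition saying that these values lie in a fixed closed convex set passes from `a` to
`a_Λ^L`: the bound `M‖u‖‖v‖` (a closed ball) and coercivity `α‖u‖² ≤ Re` (a closed half-plane).
Sesquilinearity and symmetry pass because averaging is additive, homogeneous and commutes with
the ℝ-linear map `conj`. On each subinterval `a_Λ^L(·;u,v)` is affine with slope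
`(a_{k+1} - a_k)(u,v) / (T/(n+1))`, of norm at most `2M‖u‖‖v‖(n+1)/T`, and Lipschitz bounds on
adjacent closed intervals glue.
-/

open Set

theorem LipschitzOnWith.Icc_union_Icc {α : Type*} [PseudoMetricSpace α] {f : ℝ → α}
    {K : NNReal} {a b c : ℝ} (hab : LipschitzOnWith K f (Icc a b))
    (hbc : LipschitzOnWith K f (Icc b c)) : LipschitzOnWith K f (Icc a c) := by
  rw [lipschitzOnWith_iff_dist_le_mul] at *
  intro s hs t ht
  wlog hst : s ≤ t generalizing s t
  · rw [dist_comm, dist_comm s]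
    exact this t ht s hs (le_of_not_ge hst)
  rcases le_total t b with htb | hbt
  · exact hab s ⟨hs.1, hst.trans htb⟩ t ⟨ht.1, htb⟩
  rcases le_total s b with hsb | hbs
  · calc dist (f s) (f t) ≤ dist (f s) (f b) + dist (f b) (f t) := dist_triangle _ _ _
      _ ≤ K * dist s b + K * dist b t :=
          add_le_add (hab s ⟨hs.1, hsb⟩ b ⟨hs.1.trans hsb, le_rfl⟩)
            (hbc b ⟨le_rfl, hbt.trans ht.2⟩ t ⟨hbt, ht.2⟩)
      _ = K * dist s t := by
          rw [Real.dist_eq, Real.dist_eq, Real.dist_eq, abs_of_nonpos (by linarith),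
            abs_of_nonpos (by linarith), abs_of_nonpos (by linarith)]
          ring
  · exact hbc s ⟨hbs, hs.2⟩ t ⟨hbs.trans hst, ht.2⟩

section

variable {E : Type*} [NormedAddCommGroup E] {T : ℝ} {n : ℕ}

lemma uidx_le (T : ℝ) (n : ℕ) (t : ℝ) : uidx T n t ≤ n := min_le_right _ _

lemma uidx_eq_min_floor_div (T : ℝ) (n : ℕ) (t : ℝ) :
    uidx T n t = min ⌊t / (T / (n + 1))⌋₊ n := by
  rw [uidx, div_div_eq_mul_div]

lemma uidx_mul_le (hT : 0 < T) {t : ℝ} (ht : 0 ≤ t) : uidx T n t * (T / (n + 1)) ≤ t := by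
  have hh : 0 < T / (n + 1) := by positivity
  rw [← le_div_iff₀ hh, uidx_eq_min_floor_div]
  calc ((min ⌊t / (T / (n + 1))⌋₊ n : ℕ) : ℝ) ≤ ⌊t / (T / (n + 1))⌋₊ := by
        exact_mod_cast min_le_left _ _
    _ ≤ t / (T / (n + 1)) := Nat.floor_le (by positivity)

lemma le_uidx_add_one_mul (hT : 0 < T) {t : ℝ} (ht : t ≤ T) :
    t ≤ (uidx T n t + 1) * (T / (n + 1)) := by
  have hh : 0 < T / (n + 1) := by positivity
  rw [uidx_eq_min_floor_div]
  rcases le_total ⌊t / (T / (n + 1))⌋₊ n with hle | hle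
  · rw [min_eq_left hle, ← div_le_iff₀ hh]
    exact (Nat.lt_floor_add_one _).le
  · rw [min_eq_right hle]
    calc t ≤ T := ht
      _ = (n + 1) * (T / (n + 1)) := by field_simp

lemma uidx_eq_of_mem_Ico (hT : 0 < T) {k : ℕ} (hk : k ≤ n) {t : ℝ}
    (ht : t ∈ Ico (k * (T / (n + 1))) ((k + 1) * (T / (n + 1)))) : uidx T n t = k := by
  have hh : 0 < T / (n + 1) := by positivity
  have hfloor : ⌊t / (T / (n + 1))⌋₊ = k := by
    rw [Nat.floor_eq_iff (div_nonneg (le_trans (by positivity) ht.1) hh.le), le_div_iff₀ hh,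
      div_lt_iff₀ hh]
    exact ht
  rw [uidx_eq_min_floor_div, hfloor, min_eq_left hk]

lemma uidx_natCast_mul (hT : 0 < T) (j : ℕ) : uidx T n (j * (T / (n + 1))) = min j n := by
  have hh : 0 < T / (n + 1) := by positivity
  rw [uidx_eq_min_floor_div, mul_div_cancel_right₀ _ hh.ne', Nat.floor_natCast]

lemma uIcc_subinterval_subset_Icc (hT : 0 < T) {k : ℕ} (hk : k ≤ n) :
    uIcc (k * (T / (n + 1))) ((k + 1) * (T / (n + 1))) ⊆ Icc 0 T := by
  have hk' : (k : ℝ) + 1 ≤ n + 1 := by exact_mod_cast Nat.succ_le_succ hk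
  rw [uIcc_of_le (by gcongr; linarith)]
  refine Icc_subset_Icc (by positivity) ?_
  calc (k + 1) * (T / (n + 1)) ≤ (n + 1) * (T / (n + 1)) := by gcongr
    _ = T := by field_simp

lemma MeasureTheory.IntegrableOn.intervalIntegrable_subinterval {f : ℝ → E} (hT : 0 < T)
    (hf : IntegrableOn f (Icc 0 T)) {k : ℕ} (hk : k ≤ n) :
    IntervalIntegrable f volume (k * (T / (n + 1))) ((k + 1) * (T / (n + 1))) :=
  (hf.mono_set (uIcc_subinterval_subset_Icc hT hk)).intervalIntegrable

variable [NormedSpace ℝ E]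

lemma uavg_eq_intervalAverage (f : ℝ → E) (T : ℝ) (n k : ℕ) :
    uavg f T n k = ⨍ r in (k * (T / (n + 1)))..((k + 1) * (T / (n + 1))), f r := by
  rw [uavg, interval_average_eq, add_mul, one_mul, add_sub_cancel_left, inv_div]

lemma uavg_mem_of_convex [CompleteSpace E] {S : Set E} (hS : Convex ℝ S) (hSc : IsClosed S)
    (hT : 0 < T) {f : ℝ → E} (hf : IntegrableOn f (Icc 0 T)) (hfS : MapsTo f (Icc 0 T) S) {k : ℕ}
    (hk : k ≤ n) : uavg f T n k ∈ S := by
  have hsub := uIoc_subset_uIcc.trans (uIcc_subinterval_subset_Icc hT hk)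
  rw [uavg_eq_intervalAverage]
  refine hS.set_average_mem hSc ?_ (by rw [Real.volume_uIoc]; exact ENNReal.ofReal_ne_top)
    (ae_restrict_of_forall_mem measurableSet_uIoc fun x hx => hfS (hsub hx)) (hf.mono_set hsub)
  rw [Real.volume_uIoc, ne_eq, ENNReal.ofReal_eq_zero, not_le, abs_pos]
  ring_nf
  positivity

lemma uavg_congr (hT : 0 < T) {f g : ℝ → E} (hfg : EqOn f g (Icc 0 T)) {k : ℕ} (hk : k ≤ n) :
    uavg f T n k = uavg g T n k := by
  rw [uavg, uavg, integral_congr (hfg.mono (uIcc_subinterval_subset_Icc hT hk))]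

lemma uavg_add {f g : ℝ → E} (hT : 0 < T) (hf : IntegrableOn f (Icc 0 T))
    (hg : IntegrableOn g (Icc 0 T)) {k : ℕ} (hk : k ≤ n) :
    uavg (fun r => f r + g r) T n k = uavg f T n k + uavg g T n k := by
  rw [uavg, uavg, uavg, integral_add (hf.intervalIntegrable_subinterval hT hk)
    (hg.intervalIntegrable_subinterval hT hk), smul_add]

lemma uavg_smul {𝕜 : Type*} [NormedField 𝕜] [NormedSpace 𝕜 E] [SMulCommClass ℝ 𝕜 E] (c : 𝕜)
    (f : ℝ → E) (k : ℕ) : uavg (fun r => c • f r) T n k = c • uavg f T n k := by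
  rw [uavg, uavg, intervalIntegral.integral_smul]
  exact smul_comm _ _ _

lemma ContinuousLinearMap.uavg_comp_comm {F : Type*} [NormedAddCommGroup F] [NormedSpace ℝ F]
    [CompleteSpace E] [CompleteSpace F] (L : E →L[ℝ] F) {f : ℝ → E} (hT : 0 < T)
    (hf : IntegrableOn f (Icc 0 T)) {k : ℕ} (hk : k ≤ n) :
    uavg (fun r => L (f r)) T n k = L (uavg f T n k) := by
  rw [uavg, uavg, L.intervalIntegral_comp_comm (hf.intervalIntegrable_subinterval hT hk), map_smul]

lemma linApprox_congr (hT : 0 < T) {f g : ℝ → E} (hfg : EqOn f g (Icc 0 T)) (t : ℝ) :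
    linApprox f T n t = linApprox g T n t := by
  rw [linApprox, linApprox, uavg_congr hT hfg (uidx_le T n t),
    uavg_congr hT hfg (min_le_right _ _)]

lemma linApprox_add {f g : ℝ → E} (hT : 0 < T) (hf : IntegrableOn f (Icc 0 T))
    (hg : IntegrableOn g (Icc 0 T)) (t : ℝ) :
    linApprox (fun r => f r + g r) T n t = linApprox f T n t + linApprox g T n t := by
  rw [linApprox, linApprox, linApprox, uavg_add hT hf hg (uidx_le T n t),
    uavg_add hT hf hg (min_le_right _ _), smul_add, smul_add]
  abel

lemma linApprox_smul {𝕜 : Type*} [NormedField 𝕜] [NormedSpace 𝕜 E] [SMulCommClass ℝ 𝕜 E]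
    (c : 𝕜) (f : ℝ → E) (t : ℝ) :
    linApprox (fun r => c • f r) T n t = c • linApprox f T n t := by
  rw [linApprox, linApprox, uavg_smul, uavg_smul, smul_add, smul_comm _ c, smul_comm _ c]

lemma ContinuousLinearMap.linApprox_comp_comm {F : Type*} [NormedAddCommGroup F]
    [NormedSpace ℝ F] [CompleteSpace E] [CompleteSpace F] (L : E →L[ℝ] F) {f : ℝ → E}
    (hT : 0 < T) (hf : IntegrableOn f (Icc 0 T)) (t : ℝ) :
    linApprox (fun r => L (f r)) T n t = L (linApprox f T n t) := by
  rw [linApprox, linApprox, L.uavg_comp_comm hT hf (uidx_le T n t),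
    L.uavg_comp_comm hT hf (min_le_right _ _), map_add, map_smul, map_smul]

lemma linApprox_mem_of_convex {S : Set E} (hS : Convex ℝ S) (hT : 0 < T) {f : ℝ → E}
    (hfS : ∀ k ≤ n, uavg f T n k ∈ S) {t : ℝ} (ht : t ∈ Icc 0 T) : linApprox f T n t ∈ S := by
  have hh : 0 < T / (n + 1) := by positivity
  have hlo := uidx_mul_le hT ht.1 (n := n)
  have hhi := le_uidx_add_one_mul hT ht.2 (n := n)
  refine hS (hfS _ (uidx_le T n t)) (hfS _ (min_le_right _ _))
    (div_nonneg (by linarith) hh.le) (div_nonneg (by linarith) hh.le) ?_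
  field_simp
  ring

lemma linApprox_mem [CompleteSpace E] {S : Set E} (hS : Convex ℝ S) (hSc : IsClosed S)
    (hT : 0 < T) {f : ℝ → E} (hf : IntegrableOn f (Icc 0 T)) (hfS : MapsTo f (Icc 0 T) S)
    {t : ℝ} (ht : t ∈ Icc 0 T) : linApprox f T n t ∈ S :=
  linApprox_mem_of_convex hS hT (fun _ hk => uavg_mem_of_convex hS hSc hT hf hfS hk) ht

lemma linApprox_eq_affine (hT : T ≠ 0) (f : ℝ → E) (t : ℝ) :
    linApprox f T n t = uavg f T n (uidx T n t) +
      ((t - uidx T n t * (T / (n + 1))) / (T / (n + 1))) •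
        (uavg f T n (min (uidx T n t + 1) n) - uavg f T n (uidx T n t)) := by
  have hc : ((uidx T n t + 1 : ℝ) * (T / (n + 1)) - t) / (T / (n + 1)) =
      1 - (t - uidx T n t * (T / (n + 1))) / (T / (n + 1)) := by
    field_simp
    ring
  rw [linApprox, hc]
  module

lemma linApprox_eq_of_mem_Icc (hT : 0 < T) (f : ℝ → E) {k : ℕ} (hk : k ≤ n) {t : ℝ}
    (ht : t ∈ Icc (k * (T / (n + 1))) ((k + 1) * (T / (n + 1)))) :
    linApprox f T n t = uavg f T n k + ((t - k * (T / (n + 1))) / (T / (n + 1))) •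
      (uavg f T n (min (k + 1) n) - uavg f T n k) := by
  rw [linApprox_eq_affine hT.ne']
  rcases ht.2.lt_or_eq with hlt | rfl
  · rw [uidx_eq_of_mem_Ico hT hk ⟨ht.1, hlt⟩]
  have hnode : ((k : ℝ) + 1) * (T / (n + 1)) = ((k + 1 : ℕ) : ℝ) * (T / (n + 1)) := by
    push_cast
    rfl
  -- at the right endpoint the index jumps to `k + 1`, unless it is clamped at `n`
  rw [hnode, uidx_natCast_mul hT]
  obtain hkn | rfl : k + 1 ≤ n ∨ k = n := by omega
  · have hslope : (((k + 1 : ℕ) : ℝ) * (T / (n + 1)) - k * (T / (n + 1))) / (T / (n + 1)) = 1 := by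
      push_cast
      field_simp
      ring
    rw [min_eq_left hkn, sub_self, zero_div, zero_smul, add_zero, hslope, one_smul,
      add_sub_cancel]
  · simp only [min_eq_right (Nat.le_succ k)]

lemma lipschitzOnWith_linApprox_subinterval (hT : 0 < T) {f : ℝ → E} {C : ℝ}
    (hC : ∀ j ≤ n, ‖uavg f T n j‖ ≤ C) {k : ℕ} (hk : k ≤ n) :
    LipschitzOnWith (2 * C * ((n + 1) / T)).toNNReal (linApprox f T n)
      (Icc (k * (T / (n + 1))) ((k + 1) * (T / (n + 1)))) := by
  have hC0 : 0 ≤ C := (norm_nonneg _).trans (hC 0 n.zero_le)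
  set w := uavg f T n (min (k + 1) n) - uavg f T n k
  have hw : ‖w‖ ≤ 2 * C :=
    (norm_sub_le _ _).trans (by linarith [hC _ (min_le_right (k + 1) n), hC k hk])
  rw [lipschitzOnWith_iff_dist_le_mul]
  intro s hs t ht
  have hslope : (s - k * (T / (n + 1))) / (T / (n + 1)) - (t - k * (T / (n + 1))) / (T / (n + 1))
      = (s - t) * ((n + 1) / T) := by
    field_simp
    ring
  rw [linApprox_eq_of_mem_Icc hT f hk hs, linApprox_eq_of_mem_Icc hT f hk ht, dist_add_left,
    dist_eq_norm, ← sub_smul, hslope, norm_smul, Real.coe_toNNReal _ (by positivity),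
    Real.dist_eq, Real.norm_eq_abs, abs_mul, abs_of_pos (by positivity : (0 : ℝ) < (n + 1) / T)]
  calc |s - t| * ((n + 1) / T) * ‖w‖ ≤ |s - t| * ((n + 1) / T) * (2 * C) := by gcongr
    _ = 2 * C * ((n + 1) / T) * |s - t| := by ring

lemma lipschitzOnWith_linApprox (hT : 0 < T) {f : ℝ → E} {C : ℝ}
    (hC : ∀ j ≤ n, ‖uavg f T n j‖ ≤ C) :
    LipschitzOnWith (2 * C * ((n + 1) / T)).toNNReal (linApprox f T n) (Icc 0 T) := by
  have hpieces : ∀ k ≤ n, LipschitzOnWith (2 * C * ((n + 1) / T)).toNNReal (linApprox f T n)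
      (Icc 0 ((k + 1) * (T / (n + 1)))) := by
    intro k hk
    induction k with
    | zero => simpa using lipschitzOnWith_linApprox_subinterval hT hC n.zero_le
    | succ k ih =>
      have hlast := lipschitzOnWith_linApprox_subinterval hT hC hk
      push_cast at hlast ⊢
      exact (ih (by omega)).Icc_union_Icc hlast
  have hT' : ((n : ℝ) + 1) * (T / (n + 1)) = T := by field_simp
  simpa only [hT'] using hpieces n le_rfl

lemma exists_sesqForm_eq_formLin {V : Type*} [NormedAddCommGroup V] [InnerProductSpace ℂ V]
    (hT : 0 < T) (a : ℝ → V →ₗ⋆[ℂ] V →ₗ[ℂ] ℂ)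
    (hint : ∀ u v : V, IntegrableOn (fun r => a r u v) (Icc 0 T)) (t : ℝ) :
    ∃ b : V →ₗ⋆[ℂ] V →ₗ[ℂ] ℂ, ∀ u v : V, b u v = formLin a T n t u v := by
  refine ⟨LinearMap.mk₂'ₛₗ (starRingEnd ℂ) (RingHom.id ℂ) (formLin a T n t) ?_ ?_ ?_ ?_,
    fun _ _ => rfl⟩
  · intro u₁ u₂ v
    simp only [formLin, map_add, LinearMap.add_apply]
    exact linApprox_add hT (hint u₁ v) (hint u₂ v) t
  · intro c u v
    simp only [formLin, map_smulₛₗ, LinearMap.smul_apply]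
    exact linApprox_smul _ _ t
  · intro u v₁ v₂
    simp only [formLin, map_add]
    exact linApprox_add hT (hint u v₁) (hint u v₂) t
  · intro c u v
    simp only [formLin, map_smul]
    exact linApprox_smul c _ t

end

theorem formLin_symmetric_closed_lipschitz_general
    {V : Type*} [NormedAddCommGroup V] [InnerProductSpace ℂ V]
    (T : ℝ) (hT : 0 < T)
    (a : ℝ → V →ₗ⋆[ℂ] V →ₗ[ℂ] ℂ)
    (M α : ℝ)
    (hmeas : ∀ u v : V, Measurable fun t => a t u v)
    (hbdd : ∀ t ∈ Set.Icc (0 : ℝ) T, ∀ u v : V, ‖a t u v‖ ≤ M * ‖u‖ * ‖v‖)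
    (hcoer : ∀ t ∈ Set.Icc (0 : ℝ) T, ∀ u : V, α * ‖u‖ ^ 2 ≤ (a t u u).re)
    (hsymm : ∀ t ∈ Set.Icc (0 : ℝ) T, ∀ u v : V,
      a t u v = starRingEnd ℂ (a t v u))
    (n : ℕ) :
    (∀ t ∈ Set.Icc (0 : ℝ) T, ∃ b : V →ₗ⋆[ℂ] V →ₗ[ℂ] ℂ,
        ∀ u v : V, b u v = formLin a T n t u v) ∧
    (∀ t ∈ Set.Icc (0 : ℝ) T, ∀ u v : V,
        formLin a T n t u v = starRingEnd ℂ (formLin a T n t v u)) ∧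
    (∀ t ∈ Set.Icc (0 : ℝ) T, ∀ u v : V, ‖formLin a T n t u v‖ ≤ M * ‖u‖ * ‖v‖) ∧
    (∀ t ∈ Set.Icc (0 : ℝ) T, ∀ u : V, α * ‖u‖ ^ 2 ≤ (formLin a T n t u u).re) ∧
    (∀ u v : V, ∃ L : NNReal,
        LipschitzOnWith L (fun t => formLin a T n t u v) (Set.Icc (0 : ℝ) T)) := by
  have hball : ∀ u v : V,
      MapsTo (fun r => a r u v) (Icc 0 T) (Metric.closedBall 0 (M * ‖u‖ * ‖v‖)) :=
    fun u v t ht => mem_closedBall_zero_iff.2 (hbdd t ht u v)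
  have hint : ∀ u v : V, IntegrableOn (fun r => a r u v) (Icc 0 T) := fun u v =>
    Measure.integrableOn_of_bounded measure_Icc_lt_top.ne (hmeas u v).aestronglyMeasurable
      (ae_restrict_of_forall_mem measurableSet_Icc (hbdd · · u v))
  have havg : ∀ u v : V, ∀ k ≤ n, ‖uavg (fun r => a r u v) T n k‖ ≤ M * ‖u‖ * ‖v‖ :=
    fun u v _ hk => mem_closedBall_zero_iff.1 <| uavg_mem_of_convex (convex_closedBall _ _)
      Metric.isClosed_closedBall hT (hint u v) (hball u v) hk
  refine ⟨fun t _ => exists_sesqForm_eq_formLin hT a hint t, fun t _ u v => ?_,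
    fun t ht u v => ?_, fun t ht u => ?_, fun u v => ⟨_, lipschitzOnWith_linApprox hT (havg u v)⟩⟩
  · rw [formLin, linApprox_congr hT (fun r hr => hsymm r hr u v)]
    exact Complex.conjCLE.toContinuousLinearMap.linApprox_comp_comm hT (hint v u) t
  · exact mem_closedBall_zero_iff.1 <| linApprox_mem (convex_closedBall _ _)
      Metric.isClosed_closedBall hT (hint u v) (hball u v) ht
  · exact linApprox_mem (convex_halfSpace_re_ge _) (isClosed_le continuous_const
      Complex.continuous_re) hT (hint u u) (fun r hr => hcoer r hr u) ht

/-- If `a` is a symmetric non-autonomous closed form with constants `M, α`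
(and `ω = 0`), then the piecewise linear interpolation `a_Λ^L` of its interval
averages is again a symmetric non-autonomous closed form with the same
constants `M, α`, and `t ↦ a_Λ^L(t;u,v)` is Lipschitz continuous on `[0,T]`
for all fixed `u, v ∈ V`. -/
theorem formLin_symmetric_closed_lipschitz
    {V H : Type*} [NormedAddCommGroup V] [InnerProductSpace ℂ V] [CompleteSpace V]
    [NormedAddCommGroup H] [InnerProductSpace ℂ H] [CompleteSpace H]
    (ι : V →L[ℂ] H) (hinj : Function.Injective ι) (hdense : DenseRange ι)
    (T : ℝ) (hT : 0 < T)
    (a : ℝ → V →ₗ⋆[ℂ] V →ₗ[ℂ] ℂ)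
    (M α : ℝ) (hα : 0 < α) (hM : 0 ≤ M)
    (hmeas : ∀ u v : V, Measurable fun t => a t u v)
    (hbdd : ∀ t ∈ Set.Icc (0 : ℝ) T, ∀ u v : V, ‖a t u v‖ ≤ M * ‖u‖ * ‖v‖)
    (hcoer : ∀ t ∈ Set.Icc (0 : ℝ) T, ∀ u : V, α * ‖u‖ ^ 2 ≤ (a t u u).re)
    (hsymm : ∀ t ∈ Set.Icc (0 : ℝ) T, ∀ u v : V,
      a t u v = starRingEnd ℂ (a t v u))
    (n : ℕ) :
    (∀ t ∈ Set.Icc (0 : ℝ) T, ∃ b : V →ₗ⋆[ℂ] V →ₗ[ℂ] ℂ,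
        ∀ u v : V, b u v = formLin a T n t u v) ∧
    (∀ t ∈ Set.Icc (0 : ℝ) T, ∀ u v : V,
        formLin a T n t u v = starRingEnd ℂ (formLin a T n t v u)) ∧
    (∀ t ∈ Set.Icc (0 : ℝ) T, ∀ u v : V, ‖formLin a T n t u v‖ ≤ M * ‖u‖ * ‖v‖) ∧
    (∀ t ∈ Set.Icc (0 : ℝ) T, ∀ u : V, α * ‖u‖ ^ 2 ≤ (formLin a T n t u u).re) ∧
    (∀ u v : V, ∃ L : NNReal,
        LipschitzOnWith L (fun t => formLin a T n t u v) (Set.Icc (0 : ℝ) T)) :=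
  formLin_symmetric_closed_lipschitz_general T hT a M α hmeas hbdd hcoer hsymm n

end
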